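/- arXiv:1503.08044 — 4 statements merged into one kernel-verified Lean document; each statement's English description precedes it below -/
import Mathlib

section
/- (Burnside) Let V be a finite-dimensional complex vector space with dim V ≥ 1, and let 𝔄 ⊆ End(V) be a unital subalgebra such that every nonzero vector of V is cyclic for 𝔄 (i.e., 𝔄 acts irreducibly). Then 𝔄 = End(V). -/
/-!
Irreducibility makes `V` a simple `𝔄`-module. By Schur's lemma over an algebraically closed
field its commutant `End 𝔄 V` consists of scalars, so every linear map of `V` commutes with
the commutant; since `V` is finite over its commutant, the Jacobson density theorem realises
every such map by an element of `𝔄`.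
-/

open Module

theorem Subalgebra.isSimpleModule_of_forall_exists_apply_eq {R V : Type*} [CommRing R]
    [AddCommGroup V] [Module R V] [Nontrivial V] (A : Subalgebra R (End R V))
    (hcyc : ∀ v : V, v ≠ 0 → ∀ w : V, ∃ a ∈ A, a v = w) : IsSimpleModule A V :=
  isSimpleModule_iff_toSpanSingleton_surjective.mpr ⟨‹_›, fun v hv w ↦ by
    obtain ⟨a, ha, rfl⟩ := hcyc v hv w
    exact ⟨⟨a, ha⟩, rfl⟩⟩

theorem Subalgebra.eq_top_of_isSimpleModule_of_isAlgClosed {k V : Type*} [Field k]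
    [IsAlgClosed k] [AddCommGroup V] [Module k V] [FiniteDimensional k V]
    (A : Subalgebra k (End k V)) [IsSimpleModule A V] : A = ⊤ := by
  have schur := IsSimpleModule.algebraMap_end_bijective_of_isAlgClosed (A := A) (V := V) k
  have : Module.Finite (End A V) V := .of_restrictScalars_finite k _ _
  refine eq_top_iff.mpr fun T _ ↦ ?_
  let T' : End (End A V) V :=
    { toFun := T
      map_add' := T.map_add
      map_smul' := fun f v ↦ by
        obtain ⟨c, rfl⟩ := schur.2 f
        simp only [algebraMap_smul, map_smul, RingHom.id_apply] }
  obtain ⟨a, ha⟩ := Module.Finite.toModuleEnd_moduleEnd_surjective T'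
  have : (a : End k V) = T := LinearMap.ext fun v ↦ congr($ha v)
  exact this ▸ a.2

theorem stmt_3 (V : Type*) [AddCommGroup V] [Module ℂ V] [FiniteDimensional ℂ V]
    (h1 : 1 ≤ Module.finrank ℂ V) (𝔄 : Subalgebra ℂ (Module.End ℂ V))
    (hcyc : ∀ v : V, v ≠ 0 → ∀ w : V, ∃ A ∈ 𝔄, A v = w) :
    𝔄 = ⊤ := by
  have : Nontrivial V := Module.nontrivial_of_finrank_pos (R := ℂ) h1
  have : IsSimpleModule 𝔄 V := 𝔄.isSimpleModule_of_forall_exists_apply_eq hcyc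
  exact 𝔄.eq_top_of_isSimpleModule_of_isAlgClosed
end

section
/- Let A₁, …, A_m ∈ End(V) generate a unital associative algebra 𝔄, where V is an n-dimensional complex vector space. If V is a cyclic representation of 𝔄 (there exists a cyclic vector), then for every (μ₁, …, μ_m) ∈ ℂ^m, the rank of the horizontal concatenation [A₁ − μ₁ I | ⋯ | A_m − μ_m I] is at least n − 1; equivalently, the intersection of the kernels of the adjoints (A_j − μ_j I)* has dimension at most 1. -/
/-!
A covector `p` killed by every `(A j - μ j • 1)ᵀ` is a common left eigenvector of the `A j`, hence
of every element of the algebra they generate. If `v` is cyclic, `p` is then determined by the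
single number `p v`, so evaluation at `v` embeds the space of such covectors into the base field.
-/

namespace Module.Dual

variable {K V : Type*} [Field K] [AddCommGroup V] [Module K V]

def eigenSubalgebra (p : Module.Dual K V) : Subalgebra K (Module.End K V) where
  carrier := {a | ∃ c : K, p ∘ₗ a = c • p}
  mul_mem' := by
    rintro a b ⟨c, hc⟩ ⟨d, hd⟩
    refine ⟨c * d, ?_⟩
    rw [Module.End.mul_eq_comp, ← LinearMap.comp_assoc, hc, LinearMap.smul_comp, hd, smul_smul]
  add_mem' := by
    rintro a b ⟨c, hc⟩ ⟨d, hd⟩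
    exact ⟨c + d, by rw [LinearMap.comp_add, hc, hd, add_smul]⟩
  algebraMap_mem' r := ⟨r, by ext; simp [Module.algebraMap_end_apply]⟩

lemma mem_ker_dualMap_sub_smul_one_iff (p : Module.Dual K V) (f : Module.End K V) (c : K) :
    p ∈ LinearMap.ker (f - c • 1 : Module.End K V).dualMap ↔ p ∘ₗ f = c • p := by
  rw [LinearMap.mem_ker, LinearMap.dualMap_apply', LinearMap.comp_sub, sub_eq_zero,
    LinearMap.comp_smul, Module.End.one_eq_id, LinearMap.comp_id]

lemma adjoin_le_eigenSubalgebra {ι : Type*} {A : ι → Module.End K V} {μ : ι → K}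
    {p : Module.Dual K V} (hp : ∀ j, p ∘ₗ A j = μ j • p) :
    Algebra.adjoin K (Set.range A) ≤ p.eigenSubalgebra :=
  Algebra.adjoin_le <| Set.range_subset_iff.mpr fun j => ⟨μ j, hp j⟩

lemma eq_zero_of_apply_cyclic_eq_zero {S : Subalgebra K (Module.End K V)} {v : V}
    (hv : ∀ w : V, ∃ a ∈ S, a v = w) {p : Module.Dual K V} (hS : S ≤ p.eigenSubalgebra)
    (hpv : p v = 0) : p = 0 := by
  ext w
  obtain ⟨a, ha, rfl⟩ := hv w
  obtain ⟨c, hc⟩ := hS ha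
  simpa [hpv] using LinearMap.congr_fun hc v

end Module.Dual

open Module.Dual in
theorem stmt_4_general (V : Type*) [AddCommGroup V] [Module ℂ V]
    (m : ℕ) (A : Fin m → Module.End ℂ V)
    (hcyc : ∃ v : V, ∀ w : V, ∃ a ∈ Algebra.adjoin ℂ (Set.range A), a v = w) :
    ∀ μ : Fin m → ℂ,
      Module.finrank ℂ
        ↥(⨅ j, LinearMap.ker (LinearMap.dualMap
            ((A j - μ j • 1 : Module.End ℂ V) : V →ₗ[ℂ] V))) ≤ 1 := by
  intro μ
  obtain ⟨v, hv⟩ := hcyc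
  set W := ⨅ j, LinearMap.ker (LinearMap.dualMap
      ((A j - μ j • 1 : Module.End ℂ V) : V →ₗ[ℂ] V))
  have hadjoin (p : W) : Algebra.adjoin ℂ (Set.range A) ≤ (p : Module.Dual ℂ V).eigenSubalgebra :=
    adjoin_le_eigenSubalgebra fun j =>
      (mem_ker_dualMap_sub_smul_one_iff _ _ _).mp (Submodule.mem_iInf _ |>.mp p.2 j)
  let evalAt : W →ₗ[ℂ] ℂ := (Module.Dual.eval ℂ V v).comp W.subtype
  have hinj : Function.Injective evalAt := by
    rw [← LinearMap.ker_eq_bot, LinearMap.ker_eq_bot']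
    exact fun p hp => Subtype.ext (eq_zero_of_apply_cyclic_eq_zero hv (hadjoin p) hp)
  calc Module.finrank ℂ W ≤ Module.finrank ℂ ℂ := LinearMap.finrank_le_finrank_of_injective hinj
    _ = 1 := Module.finrank_self ℂ

theorem stmt_4 (V : Type*) [AddCommGroup V] [Module ℂ V] [FiniteDimensional ℂ V]
    (m : ℕ) (A : Fin m → Module.End ℂ V)
    (hcyc : ∃ v : V, ∀ w : V, ∃ a ∈ Algebra.adjoin ℂ (Set.range A), a v = w) :
    ∀ μ : Fin m → ℂ,
      Module.finrank ℂ
        ↥(⨅ j, LinearMap.ker (LinearMap.dualMap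
            ((A j - μ j • 1 : Module.End ℂ V) : V →ₗ[ℂ] V))) ≤ 1 :=
  stmt_4_general V m A hcyc
end

section
/- Let A₁, …, A_m ∈ End(V), dim V = n over ℂ, and suppose the Lie algebra generated by A₁, …, A_m (under commutators) is solvable. If for every (μ₁, …, μ_m) ∈ ℂ^m the space of covectors p ∈ V* with p ∘ (A_j − μ_j I) = 0 for all j has dimension at most r, then there exists an r-dimensional subspace ℬ ⊆ V that is cyclic for the unital associative algebra generated by A₁, …, A_m. -/
attribute [local instance 100] LieRing.ofAssociativeRing

open Module LinearMap

/-! Only finitely many tuples `μ` have a nonzero joint coeigenspace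
`E_μ = {p ∈ V* | p ∘ A_j = μ_j p for all j}`, and each has dimension at most `r`, so over the
infinite field `ℂ` some subspace `C ⊆ V*` of dimension `n - r` meets every `E_μ` trivially.
Take `ℬ = C^⊥ ⊆ V`, of dimension `r`. The span `W` of `𝔄 ℬ` is invariant under the solvable Lie
algebra generated by the `A_j`, which therefore acts on `W^⊥ ⊆ ℬ^⊥ = C`. If `W ≠ V`, Lie's
theorem yields a common eigenvector `p ≠ 0` in `W^⊥`, that is `p ∈ C ∩ E_μ` for some `μ`. -/

section GenericComplement

variable {K V : Type*} [Field K] [AddCommGroup V] [Module K V]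

theorem Subspace.exists_forall_notMem_of_forall_ne_top [Infinite K] (s : Finset (Submodule K V))
    (hs : ∀ p ∈ s, p ≠ ⊤) : ∃ v : V, ∀ p ∈ s, v ∉ p := by
  obtain ⟨v, hv⟩ := (Set.ne_univ_iff_exists_notMem _).mp
    (Subspace.biUnion_ne_univ_of_top_notMem fun h => hs ⊤ h rfl)
  exact ⟨v, fun p hp hvp => hv (Set.mem_biUnion hp hvp)⟩

theorem Submodule.disjoint_sup_span_singleton {C E : Submodule K V} {v : V} (hCE : Disjoint C E)
    (hv : v ∉ C ⊔ E) : Disjoint (C ⊔ K ∙ v) E := by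
  rw [sup_comm]
  exact hCE.disjoint_sup_left_of_disjoint_sup_right (disjoint_span_singleton_of_notMem hv).symm

variable [Infinite K] [FiniteDimensional K V]

theorem Submodule.exists_finrank_eq_forall_disjoint (s : Finset (Submodule K V)) {r : ℕ}
    (hs : ∀ E ∈ s, finrank K E ≤ r) :
    ∀ t : ℕ, t + r ≤ finrank K V → ∃ C : Submodule K V, finrank K C = t ∧ ∀ E ∈ s, Disjoint C E
  | 0, _ => ⟨⊥, finrank_bot K V, fun _ _ => disjoint_bot_left⟩
  | t + 1, ht => by
    classical
    obtain ⟨C, hCt, hC⟩ := exists_finrank_eq_forall_disjoint s hs t (by omega)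
    obtain ⟨v, hv⟩ := Subspace.exists_forall_notMem_of_forall_ne_top
      (insert C (s.image (C ⊔ ·))) <| by
        simp only [Finset.mem_insert, Finset.mem_image]
        rintro _ (rfl | ⟨E, hE, rfl⟩) htop
        · have := finrank_top K V
          rw [← htop, hCt] at this
          omega
        · have := Submodule.finrank_add_le_finrank_add_finrank C E
          rw [htop, finrank_top] at this
          linarith [hs E hE]
    have hvC : v ∉ C := hv C (Finset.mem_insert_self _ _)
    refine ⟨C ⊔ K ∙ v, by rw [finrank_sup_span_singleton hvC, hCt], fun E hE => ?_⟩
    exact Submodule.disjoint_sup_span_singleton (hC E hE)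
      (hv _ (Finset.mem_insert_of_mem (Finset.mem_image_of_mem _ hE)))

end GenericComplement

section JointCoeigenspace

variable {K V ι : Type*} [Field K] [AddCommGroup V] [Module K V]

def jointCoeigenspace (A : ι → Module.End K V) (μ : ι → K) : Submodule K (Module.Dual K V) :=
  ⨅ j, ker (dualMap (A j - μ j • 1))

theorem mem_jointCoeigenspace {A : ι → Module.End K V} {μ : ι → K} {p : Module.Dual K V} :
    p ∈ jointCoeigenspace A μ ↔ ∀ j, (A j).dualMap p = μ j • p := by
  have h (j) : (A j - μ j • 1).dualMap p = (A j).dualMap p - μ j • p := by ext; simp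
  simp only [jointCoeigenspace, Submodule.mem_iInf, mem_ker, h, sub_eq_zero]

theorem finite_range_jointCoeigenspace [Finite ι] [FiniteDimensional K V]
    (A : ι → Module.End K V) :
    (Set.range (jointCoeigenspace A)).Finite := by
  have hfin : {μ | jointCoeigenspace A μ ≠ ⊥}.Finite := by
    refine (Set.Finite.pi fun j => Module.End.finite_hasEigenvalue (A j).dualMap).subset ?_
    intro μ hμ j _
    obtain ⟨p, hp, hp0⟩ := Submodule.exists_mem_ne_zero_of_ne_bot hμ
    exact Module.End.hasEigenvalue_of_hasEigenvector
      ⟨Module.End.mem_eigenspace_iff.mpr (mem_jointCoeigenspace.mp hp j), hp0⟩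
  refine ((hfin.image (jointCoeigenspace A)).insert ⊥).subset ?_
  rintro _ ⟨μ, rfl⟩
  by_cases h : jointCoeigenspace A μ = ⊥
  · exact Or.inl h
  · exact Or.inr ⟨μ, h, rfl⟩

end JointCoeigenspace

theorem LieSubalgebra.exists_mem_dualAnnihilator_forall_dualMap_eq_smul {K V : Type*} [Field K]
    [CharZero K] [IsAlgClosed K] [AddCommGroup V] [Module K V] [FiniteDimensional K V]
    (L : LieSubalgebra K (Module.End K V)) [LieAlgebra.IsSolvable L] {W : Submodule K V}
    (hW : W ≠ ⊤) (hLW : ∀ X ∈ L, ∀ w ∈ W, X w ∈ W) :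
    ∃ p ∈ W.dualAnnihilator, p ≠ 0 ∧
      ∃ χ : L → K, ∀ X : L, (X : Module.End K V).dualMap p = χ X • p := by
  let U : LieSubmodule K L (Module.Dual K V) :=
    { W.dualAnnihilator with
      lie_mem := fun {X p} hp => by
        simp only [AddSubsemigroup.mem_carrier, AddSubmonoid.mem_toSubsemigroup,
          Submodule.mem_toAddSubmonoid, Submodule.mem_dualAnnihilator] at hp ⊢
        intro w hw
        simp [hp _ (hLW X X.2 w hw)] }
  have : Nontrivial U :=
    Submodule.nontrivial_iff_ne_bot.mpr fun h => hW (Submodule.dualAnnihilator_eq_bot_iff.mp h)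
  obtain ⟨χ, hχ⟩ := LieModule.exists_nontrivial_weightSpace_of_isSolvable K L U
  obtain ⟨⟨⟨p, hpW⟩, hp⟩, hp0⟩ := exists_ne (0 : LieModule.weightSpace U χ)
  refine ⟨p, hpW, by simpa using hp0, fun X => -χ X, fun X => ?_⟩
  have := congrArg Subtype.val ((LieModule.mem_weightSpace χ _).mp hp X)
  ext v
  simpa using congrArg (- · v) this

theorem Subalgebra.apply_mem_span_setOf_apply {K V : Type*} [CommSemiring K] [AddCommMonoid V]
    [Module K V] {S : Subalgebra K (Module.End K V)} (B : Submodule K V) {a : Module.End K V}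
    (ha : a ∈ S) {w : V} (hw : w ∈ Submodule.span K {x : V | ∃ a ∈ S, ∃ b ∈ B, a b = x}) :
    a w ∈ Submodule.span K {x : V | ∃ a ∈ S, ∃ b ∈ B, a b = x} := by
  have hinv : Submodule.span K {x : V | ∃ a ∈ S, ∃ b ∈ B, a b = x} ≤
      (Submodule.span K {x : V | ∃ a ∈ S, ∃ b ∈ B, a b = x}).comap a := by
    rw [Submodule.span_le]
    rintro _ ⟨a', ha', b, hb, rfl⟩
    exact Submodule.subset_span ⟨a * a', S.mul_mem ha ha', b, hb, rfl⟩
  exact hinv hw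

theorem stmt_6 (V : Type*) [AddCommGroup V] [Module ℂ V] [FiniteDimensional ℂ V]
    (m r : ℕ) (hr : r ≤ Module.finrank ℂ V) (A : Fin m → Module.End ℂ V)
    (hsolv : LieAlgebra.IsSolvable
      (LieSubalgebra.lieSpan ℂ (Module.End ℂ V) (Set.range A)))
    (hrank : ∀ μ : Fin m → ℂ,
      Module.finrank ℂ
        ↥(⨅ j, LinearMap.ker (LinearMap.dualMap
            ((A j - μ j • 1 : Module.End ℂ V) : V →ₗ[ℂ] V))) ≤ r) :
    ∃ B : Submodule ℂ V, Module.finrank ℂ B = r ∧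
      Submodule.span ℂ
        {x : V | ∃ a ∈ Algebra.adjoin ℂ (Set.range A), ∃ b ∈ B, a b = x} = ⊤ := by
  obtain ⟨C, hCr, hC⟩ := Submodule.exists_finrank_eq_forall_disjoint
    (finite_range_jointCoeigenspace A).toFinset (r := r) (by
      simp only [Set.Finite.mem_toFinset, Set.forall_mem_range]
      exact hrank)
    (finrank ℂ V - r) (by rw [Subspace.dual_finrank_eq]; omega)
  refine ⟨C.dualCoannihilator, ?_, ?_⟩
  · have := Subspace.finrank_add_finrank_dualCoannihilator_eq C
    omega
  by_contra hW
  have hL : LieSubalgebra.lieSpan ℂ (Module.End ℂ V) (Set.range A) ≤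
      lieSubalgebraOfSubalgebra ℂ _ (Algebra.adjoin ℂ (Set.range A)) :=
    LieSubalgebra.lieSpan_le.mpr Algebra.subset_adjoin
  obtain ⟨p, hpW, hp0, χ, hχ⟩ :=
    LieSubalgebra.exists_mem_dualAnnihilator_forall_dualMap_eq_smul _ hW fun X hX w hw =>
      Subalgebra.apply_mem_span_setOf_apply _ (hL hX) hw
  have hpC : p ∈ C := by
    rw [← Subspace.dualCoannihilator_dualAnnihilator_eq (W := C)]
    refine Submodule.dualAnnihilator_anti (fun b hb => ?_) hpW
    exact Submodule.subset_span ⟨1, Subalgebra.one_mem _, b, hb, rfl⟩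
  have hpE : p ∈ jointCoeigenspace A fun j => χ ⟨A j, LieSubalgebra.subset_lieSpan ⟨j, rfl⟩⟩ :=
    mem_jointCoeigenspace.mpr fun j => hχ ⟨A j, _⟩
  exact hp0 ((Submodule.disjoint_def.mp (hC _ (by simp))) p hpC hpE)
end

section
/- Let A₁, …, A_m ∈ End(V), dim V = n over ℂ, generate a commutative unital associative algebra 𝔄. Then 𝔄 has a cyclic r-dimensional subspace if and only if for every (μ₁, …, μ_m) ∈ ℂ^m the space of covectors p ∈ V* with p ∘ (A_j − μ_j I) = 0 for all j has dimension at most r. -/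
/-!
Write `𝔄` for the algebra generated by the `Aⱼ`. A covector `p` with `p ∘ Aⱼ = μⱼ • p` for all `j`
satisfies `p ∘ a ∈ ℂ • p` for every `a ∈ 𝔄`, so when `𝔄 B` spans `V` such a covector is determined
by its restriction to `B`; this bounds the dimension of the space of these covectors by `dim B`.

Conversely, these covectors form the annihilator of `W_μ = ∑ⱼ range (Aⱼ - μⱼ)`, so the hypothesis
says `codim W_μ ≤ r`. Split `V` into the joint generalised eigenspaces `V_χ` of the `Aⱼ`. Then
`V_χ ∩ W_χ = M_χ := ∑ⱼ (Aⱼ - χⱼ) V_χ`, so `V_χ = span (u_χ) + M_χ` for some `u_χ : Fin r → V_χ`.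
Let `B` be any `r`-dimensional subspace containing the vectors `∑_χ u_χ t`. The span `P` of `𝔄 B`
is invariant, hence the sum of its intersections with the `V_χ`; it therefore contains every
`u_χ t`, so `V_χ ≤ P + M_χ`, and Nakayama's lemma for the operators `Aⱼ - χⱼ`, which commute and
are nilpotent on `V_χ`, gives `V_χ ≤ P`.
-/

open Module Submodule LinearMap

namespace Submodule

theorem map_sub_smul_one_le {R M : Type*} [CommRing R] [AddCommGroup M] [Module R M]
    {f : End R M} {p : Submodule R M} (hp : Set.MapsTo f p p) (c : R) :
    p.map (f - c • 1) ≤ p := by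
  rintro _ ⟨x, hx, rfl⟩
  exact p.sub_mem (hp hx) (p.smul_mem c hx)

section Nakayama
variable {R M ι : Type*} [Ring R] [AddCommGroup M] [Module R M]

theorem le_of_le_sup_map_of_le_ker_pow {N : End R M} {X Y : Submodule R M} {k : ℕ}
    (hY : Y.map N ≤ Y) (hX : X ≤ ker (N ^ k)) (h : X ≤ Y ⊔ X.map N) : X ≤ Y := by
  have key : ∀ i, X ≤ Y ⊔ X.map (N ^ i) := by
    intro i
    induction i with
    | zero => simp [Module.End.one_eq_id]
    | succ i ih =>
      calc X ≤ Y ⊔ X.map N := h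
        _ ≤ Y ⊔ (Y ⊔ X.map (N ^ i)).map N := sup_le_sup_left (map_mono ih) _
        _ ≤ Y ⊔ X.map (N ^ (i + 1)) := by
          rw [map_sup, pow_succ', Module.End.mul_eq_comp, map_comp, ← sup_assoc]
          exact sup_le_sup_right (sup_le le_rfl hY) _
  simpa [le_ker_iff_map.mp hX] using key k

theorem le_of_le_sup_iSup_map_of_commute [Finite ι] {N : ι → End R M}
    (hN : ∀ i j, Commute (N i) (N j)) {X P : Submodule R M} (hX : ∀ j, X.map (N j) ≤ X)
    (hP : ∀ j, P.map (N j) ≤ P) (hnil : ∀ j, ∃ k, X ≤ ker (N j ^ k))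
    (h : X ≤ P ⊔ ⨆ j, X.map (N j)) : X ≤ P := by
  classical
  cases nonempty_fintype ι
  suffices ∀ s : Finset ι, X ≤ P ⊔ ⨆ j ∈ s, X.map (N j) → X ≤ P from
    this Finset.univ (by simpa only [Finset.mem_univ, iSup_true] using h)
  intro s
  induction s using Finset.induction_on with
  | empty => simp
  | insert j₀ s _ ih =>
    intro hs
    obtain ⟨k, hk⟩ := hnil j₀
    refine ih (le_of_le_sup_map_of_le_ker_pow (N := N j₀) ?_ hk ?_)
    · simp only [map_sup, map_iSup]
      refine sup_le_sup (hP j₀) (iSup₂_mono fun j _ => ?_)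
      rw [← map_comp, ← Module.End.mul_eq_comp, (hN j₀ j).eq, Module.End.mul_eq_comp, map_comp]
      exact map_mono (hX j₀)
    · rwa [Finset.iSup_insert, sup_comm (X.map _), ← sup_assoc] at hs

end Nakayama

section FiniteDimensional
variable {K V : Type*} [Field K] [AddCommGroup V] [Module K V] [FiniteDimensional K V]

theorem exists_le_finrank_eq (p : Submodule K V) {r : ℕ} (hp : finrank K p ≤ r)
    (hr : r ≤ finrank K V) : ∃ q, p ≤ q ∧ finrank K q = r := by
  induction r with
  | zero => exact ⟨p, le_rfl, by omega⟩
  | succ r ih =>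
    rcases hp.eq_or_lt with hp | hp
    · exact ⟨p, le_rfl, hp⟩
    obtain ⟨q, hpq, hq⟩ := ih (by omega) (by omega)
    obtain ⟨v, -, hv⟩ := SetLike.exists_of_lt (lt_top_of_finrank_lt_finrank (s := q) (by omega))
    exact ⟨q ⊔ span K {v}, hpq.trans le_sup_left, by rw [finrank_sup_span_singleton hv, hq]⟩

theorem exists_fin_span_eq (U : Submodule K V) {r : ℕ} (hU : finrank K U ≤ r) :
    ∃ u : Fin r → V, span K (Set.range u) = U := by
  classical
  obtain ⟨f, hfU, hf, -⟩ := exists_fun_fin_finrank_span_eq K (U : Set V)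
  have hd : finrank K (span K (U : Set V)) ≤ r := by rwa [span_eq]
  refine ⟨Function.extend (Fin.castLE hd) f 0, le_antisymm ?_ ?_⟩
  · rw [span_le]
    rintro _ ⟨t, rfl⟩
    rw [Function.extend_def]
    split_ifs
    exacts [hfU _, U.zero_mem]
  · calc U = span K (Set.range f) := by rw [hf, span_eq]
      _ ≤ _ := span_mono ?_
    rintro _ ⟨i, rfl⟩
    exact ⟨Fin.castLE hd i, (Fin.castLE_injective hd).extend_apply f 0 i⟩

theorem exists_fin_le_span_sup {X M : Submodule K V} {r : ℕ} (hMX : M ≤ X)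
    (hX : finrank K X ≤ r + finrank K M) :
    ∃ u : Fin r → V, (∀ t, u t ∈ X) ∧ X ≤ span K (Set.range u) ⊔ M := by
  obtain ⟨C, hC⟩ := M.exists_isCompl
  have hsup : M ⊔ C ⊓ X = X := by
    rw [← sup_inf_assoc_of_le _ hMX, hC.sup_eq_top, top_inf_eq]
  have hinf : M ⊓ (C ⊓ X) = ⊥ :=
    eq_bot_iff.mpr <| (inf_le_inf_left _ inf_le_left).trans hC.inf_eq_bot.le
  have hdim := finrank_sup_add_finrank_inf_eq M (C ⊓ X)
  rw [hsup, hinf, finrank_bot] at hdim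
  obtain ⟨u, hu⟩ := (C ⊓ X).exists_fin_span_eq (r := r) (by omega)
  refine ⟨u, fun t => (hu.le (subset_span ⟨t, rfl⟩)).2, ?_⟩
  rw [hu, sup_comm, hsup]

end FiniteDimensional

theorem mapsTo_span_adjoin {R M ι : Type*} [CommRing R] [AddCommGroup M] [Module R M]
    {A : ι → End R M} (B : Submodule R M) (i : ι) :
    Set.MapsTo (A i) (span R {x | ∃ a ∈ Algebra.adjoin R (Set.range A), ∃ b ∈ B, a b = x})
      (span R {x | ∃ a ∈ Algebra.adjoin R (Set.range A), ∃ b ∈ B, a b = x}) := by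
  refine fun x hx => (span_le (p := (span R _).comap (A i)) |>.mpr ?_) hx
  rintro _ ⟨a, ha, b, hb, rfl⟩
  exact subset_span ⟨A i * a, mul_mem (Algebra.subset_adjoin ⟨i, rfl⟩) ha, b, hb, rfl⟩

end Submodule

section Dual
variable {R K V W ι : Type*} [CommRing R] [Field K] [AddCommGroup V] [AddCommGroup W]

theorem Module.Dual.exists_comp_eq_smul_of_mem_adjoin [Module R V] {A : ι → End R V}
    {μ : ι → R} {p : Dual R V} (hp : ∀ j, p ∘ₗ A j = μ j • p) {a : End R V}
    (ha : a ∈ Algebra.adjoin R (Set.range A)) : ∃ c : R, p ∘ₗ a = c • p := by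
  induction ha using Algebra.adjoin_induction with
  | mem a ha =>
    obtain ⟨j, rfl⟩ := ha
    exact ⟨μ j, hp j⟩
  | algebraMap c => exact ⟨c, by ext; simp⟩
  | add a b _ _ ha hb =>
    obtain ⟨c, hc⟩ := ha
    obtain ⟨d, hd⟩ := hb
    exact ⟨c + d, by rw [comp_add, hc, hd, add_smul]⟩
  | mul a b _ _ ha hb =>
    obtain ⟨c, hc⟩ := ha
    obtain ⟨d, hd⟩ := hb
    exact ⟨c * d, by rw [Module.End.mul_eq_comp, ← comp_assoc, hc, smul_comp, hd, smul_smul]⟩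

variable [Module K V] [Module K W]

theorem finrank_iInf_ker_dualMap_le_of_span_adjoin_eq_top [FiniteDimensional K V]
    {A : ι → End K V} {B : Submodule K V}
    (hB : span K {x | ∃ a ∈ Algebra.adjoin K (Set.range A), ∃ b ∈ B, a b = x} = ⊤)
    (μ : ι → K) :
    finrank K ↥(⨅ j, ker (dualMap (A j - μ j • 1 : End K V))) ≤ finrank K B := by
  set E := ⨅ j, ker (dualMap (A j - μ j • 1 : End K V))
  have hinj : Function.Injective (B.dualRestrict ∘ₗ E.subtype) := by
    refine (injective_iff_map_eq_zero _).mpr ?_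
    rintro ⟨p, hpE⟩ hpB
    have hp : ∀ j, p ∘ₗ A j = μ j • p := fun j => by
      have := mem_iInf _ |>.mp hpE j
      rw [mem_ker, dualMap_apply'] at this
      rw [← sub_eq_zero, ← this]
      ext; simp
    suffices ⊤ ≤ ker p by
      ext x; exact this mem_top
    rw [← hB, span_le]
    rintro _ ⟨a, ha, b, hb, rfl⟩
    obtain ⟨c, hc⟩ := Dual.exists_comp_eq_smul_of_mem_adjoin hp ha
    have hpb : p b = 0 := congr($hpB ⟨b, hb⟩)
    change (p ∘ₗ a) b = 0
    rw [hc, LinearMap.smul_apply, hpb, smul_zero]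
  calc finrank K E ≤ finrank K (Dual K B) := finrank_le_finrank_of_injective hinj
    _ = finrank K B := Subspace.dual_finrank_eq

theorem finrank_iInf_ker_dualMap_add_finrank_iSup_range [FiniteDimensional K W]
    (f : ι → V →ₗ[K] W) :
    finrank K ↥(⨅ j, ker (f j).dualMap) + finrank K ↥(⨆ j, LinearMap.range (f j)) =
      finrank K W := by
  have : ⨅ j, ker (f j).dualMap = (⨆ j, LinearMap.range (f j)).dualAnnihilator := by
    rw [dualAnnihilator_iSup_eq]
    exact iInf_congr fun j => (f j).ker_dualMap_eq_dualAnnihilator_range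
  rw [this, add_comm]
  exact Subspace.finrank_add_finrank_dualAnnihilator_eq _

end Dual

namespace Module.End

theorem mapsTo_iInf_maxGenEigenspace_of_commute {R M ι : Type*} [CommRing R] [AddCommGroup M]
    [Module R M] {A : ι → End R M} (hA : ∀ i j, Commute (A i) (A j)) (i : ι) (χ : ι → R) :
    Set.MapsTo (A i) (⨅ j, (A j).maxGenEigenspace (χ j) : Submodule R M)
      (⨅ j, (A j).maxGenEigenspace (χ j) : Submodule R M) := by
  intro x hx
  simp only [SetLike.mem_coe, mem_iInf] at hx ⊢
  exact fun j => mapsTo_maxGenEigenspace_of_comm (hA j i) (χ j) (hx j)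

variable {K V ι : Type*} [Field K] [AddCommGroup V] [Module K V] {A : ι → End K V}
  (hA : ∀ i j, Commute (A i) (A j))
include hA

theorem sup_iSup_ne_inf_iInf_maxGenEigenspace_eq {χ : ι → K} {X : Submodule K V}
    (hX : X ≤ ⨅ i, (A i).maxGenEigenspace (χ i)) :
    (X ⊔ ⨆ ψ, ⨆ (_ : ψ ≠ χ), ⨅ i, (A i).maxGenEigenspace (ψ i)) ⊓
      ⨅ i, (A i).maxGenEigenspace (χ i) = X := by
  have hindep := independent_iInf_maxGenEigenspace_of_forall_mapsTo A
    fun i j φ => mapsTo_maxGenEigenspace_of_comm (hA j i) φ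
  rw [sup_inf_assoc_of_le _ hX, (hindep χ).symm.eq_bot, sup_bot_eq]

theorem iInf_maxGenEigenspace_le_of_le_sup [Finite ι] [FiniteDimensional K V] {P : Submodule K V}
    (hP : ∀ i, Set.MapsTo (A i) P P) {χ : ι → K}
    (h : ⨅ i, (A i).maxGenEigenspace (χ i) ≤
      P ⊔ ⨆ j, (⨅ i, (A i).maxGenEigenspace (χ i)).map (A j - χ j • 1)) :
    ⨅ i, (A i).maxGenEigenspace (χ i) ≤ P := by
  refine le_of_le_sup_iSup_map_of_commute (N := fun j => A j - χ j • 1) (fun i j => ?_)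
    (fun j => map_sub_smul_one_le (mapsTo_iInf_maxGenEigenspace_of_commute hA j χ) _)
    (fun j => map_sub_smul_one_le (hP j) _) (fun j => ⟨finrank K V, ?_⟩) h
  · exact ((hA i j).sub_right ((Commute.one_right _).smul_right _)).sub_left
      ((Commute.one_left _).smul_left _)
  · rw [← genEigenspace_nat, ← maxGenEigenspace_eq_genEigenspace_finrank]
    exact iInf_le _ j

variable [IsAlgClosed K] [FiniteDimensional K V]

theorem iSup_inf_iInf_maxGenEigenspace {P : Submodule K V} (hP : ∀ i, Set.MapsTo (A i) P P) :
    ⨆ χ : ι → K, P ⊓ ⨅ i, (A i).maxGenEigenspace (χ i) = P := by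
  have htop := iSup_iInf_maxGenEigenspace_eq_top_of_iSup_maxGenEigenspace_eq_top_of_commute
    (fun i => (A i).restrict (hP i)) (fun i j _ => restrict_commute (hA i j) (hP i) (hP j))
    fun i => iSup_maxGenEigenspace_eq_top _
  simp_rw [P.inf_iInf_maxGenEigenspace_of_forall_mapsTo A hP, ← Submodule.map_iSup, htop,
    Submodule.map_top, range_subtype]

theorem mem_of_sum_mem_of_mapsTo {P : Submodule K V} (hP : ∀ i, Set.MapsTo (A i) P P)
    {S : Finset (ι → K)} {u : (ι → K) → V} (hu : ∀ χ, u χ ∈ ⨅ i, (A i).maxGenEigenspace (χ i))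
    (hS : ∑ χ ∈ S, u χ ∈ P) {χ : ι → K} (hχ : χ ∈ S) : u χ ∈ P := by
  classical
  set O := ⨆ ψ, ⨆ (_ : ψ ≠ χ), ⨅ i, (A i).maxGenEigenspace (ψ i)
  have hPO : P ≤ (P ⊓ ⨅ i, (A i).maxGenEigenspace (χ i)) ⊔ O := by
    conv_lhs => rw [← iSup_inf_iInf_maxGenEigenspace hA hP, iSup_split_single _ χ]
    exact sup_le_sup_left (iSup₂_mono fun _ _ => inf_le_right) _
  have hO : ∑ ψ ∈ S.erase χ, u ψ ∈ O := sum_mem fun ψ hψ =>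
    mem_iSup_of_mem ψ (mem_iSup_of_mem (Finset.ne_of_mem_erase hψ) (hu ψ))
  have huPO : u χ ∈ ((P ⊓ ⨅ i, (A i).maxGenEigenspace (χ i)) ⊔ O) ⊓
      ⨅ i, (A i).maxGenEigenspace (χ i) := by
    refine ⟨?_, hu χ⟩
    rw [← add_sub_cancel_right (u χ) (∑ ψ ∈ S.erase χ, u ψ), Finset.add_sum_erase S u hχ]
    exact sub_mem (hPO hS) (mem_sup_right hO)
  rw [sup_iSup_ne_inf_iInf_maxGenEigenspace_eq hA inf_le_right] at huPO
  exact huPO.1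

theorem iInf_maxGenEigenspace_inf_iSup_range_le (χ : ι → K) :
    (⨅ i, (A i).maxGenEigenspace (χ i)) ⊓ ⨆ j, LinearMap.range (A j - χ j • 1) ≤
      ⨆ j, (⨅ i, (A i).maxGenEigenspace (χ i)).map (A j - χ j • 1) := by
  set O := ⨆ ψ, ⨆ (_ : ψ ≠ χ), ⨅ i, (A i).maxGenEigenspace (ψ i)
  set M := ⨆ j, (⨅ i, (A i).maxGenEigenspace (χ i)).map (A j - χ j • 1)
  have hrange : ⨆ j, LinearMap.range (A j - χ j • 1) ≤ M ⊔ O := by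
    refine iSup_le fun j => ?_
    rw [← Submodule.map_top, ← iSup_inf_iInf_maxGenEigenspace hA (P := ⊤) fun _ _ _ => trivial,
      Submodule.map_iSup, iSup_split_single _ χ]
    refine sup_le_sup ((map_mono inf_le_right).trans (le_iSup
      (fun j => (⨅ i, (A i).maxGenEigenspace (χ i)).map (A j - χ j • 1)) j))
      (iSup₂_mono fun ψ _ => (map_mono inf_le_right).trans ?_)
    exact map_sub_smul_one_le (mapsTo_iInf_maxGenEigenspace_of_commute hA j ψ) _
  rw [inf_comm]
  calc (⨆ j, LinearMap.range (A j - χ j • 1)) ⊓ ⨅ i, (A i).maxGenEigenspace (χ i)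
      ≤ (M ⊔ O) ⊓ ⨅ i, (A i).maxGenEigenspace (χ i) := inf_le_inf_right _ hrange
    _ = M := sup_iSup_ne_inf_iInf_maxGenEigenspace_eq hA <| iSup_le fun j =>
        map_sub_smul_one_le (mapsTo_iInf_maxGenEigenspace_of_commute hA j χ) _

theorem finrank_iInf_maxGenEigenspace_le_add (χ : ι → K) {r : ℕ}
    (h : finrank K V ≤ r + finrank K ↥(⨆ j, LinearMap.range (A j - χ j • 1))) :
    finrank K ↥(⨅ i, (A i).maxGenEigenspace (χ i)) ≤
      r + finrank K ↥(⨆ j, (⨅ i, (A i).maxGenEigenspace (χ i)).map (A j - χ j • 1)) := by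
  have h₁ := finrank_sup_add_finrank_inf_eq (⨅ i, (A i).maxGenEigenspace (χ i))
    (⨆ j, LinearMap.range (A j - χ j • 1))
  have h₂ := Submodule.finrank_le ((⨅ i, (A i).maxGenEigenspace (χ i)) ⊔
    ⨆ j, LinearMap.range (A j - χ j • 1))
  have h₃ := Submodule.finrank_mono (iInf_maxGenEigenspace_inf_iSup_range_le hA χ)
  omega

theorem exists_finrank_eq_span_adjoin_eq_top [Finite ι] {r : ℕ} (hr : r ≤ finrank K V)
    (h : ∀ χ : ι → K, finrank K V ≤ r + finrank K ↥(⨆ j, LinearMap.range (A j - χ j • 1))) :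
    ∃ B : Submodule K V, finrank K B = r ∧
      span K {x | ∃ a ∈ Algebra.adjoin K (Set.range A), ∃ b ∈ B, a b = x} = ⊤ := by
  classical
  set E : (ι → K) → Submodule K V := fun χ => ⨅ i, (A i).maxGenEigenspace (χ i)
  choose u hu using fun χ => exists_fin_le_span_sup
    (iSup_le fun j => map_sub_smul_one_le (mapsTo_iInf_maxGenEigenspace_of_commute hA j χ) _)
    (finrank_iInf_maxGenEigenspace_le_add hA χ (h χ))
  have hindep : iSupIndep E := independent_iInf_maxGenEigenspace_of_forall_mapsTo A
    fun i j φ => mapsTo_maxGenEigenspace_of_comm (hA j i) φ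
  set S := (WellFoundedGT.finite_ne_bot_of_iSupIndep hindep).toFinset
  set b : Fin r → V := fun t => ∑ χ ∈ S, u χ t
  obtain ⟨B, hbB, hBr⟩ := (span K (Set.range b)).exists_le_finrank_eq
    ((finrank_range_le_card b).trans (Fintype.card_fin r).le) hr
  refine ⟨B, hBr, eq_top_iff.mpr ?_⟩
  set P := span K {x | ∃ a ∈ Algebra.adjoin K (Set.range A), ∃ b ∈ B, a b = x}
  have hP : ∀ i, Set.MapsTo (A i) P P := mapsTo_span_adjoin B
  have hbP : ∀ t, b t ∈ P := fun t =>
    subset_span ⟨1, one_mem _, b t, hbB (subset_span ⟨t, rfl⟩), rfl⟩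
  rw [← iSup_inf_iInf_maxGenEigenspace hA (P := ⊤) fun _ _ _ => trivial]
  refine iSup_le fun χ => inf_le_right.trans ?_
  by_cases hχ : χ ∈ S
  · refine iInf_maxGenEigenspace_le_of_le_sup hA hP ((hu χ).2.trans (sup_le_sup_right ?_ _))
    exact span_le.mpr <| Set.range_subset_iff.mpr fun t =>
      mem_of_sum_mem_of_mapsTo hA hP (fun ψ => (hu ψ).1 t) (hbP t) hχ
  · have hEχ : E χ = ⊥ := by simpa [S] using hχ
    exact hEχ.le.trans bot_le

end Module.End

theorem stmt_7 (V : Type*) [AddCommGroup V] [Module ℂ V] [FiniteDimensional ℂ V]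
    (m r : ℕ) (hr : r ≤ Module.finrank ℂ V) (A : Fin m → Module.End ℂ V)
    (hcomm : ∀ i j, Commute (A i) (A j)) :
    (∃ B : Submodule ℂ V, Module.finrank ℂ B = r ∧
        Submodule.span ℂ
          {x : V | ∃ a ∈ Algebra.adjoin ℂ (Set.range A), ∃ b ∈ B, a b = x} = ⊤) ↔
      (∀ μ : Fin m → ℂ,
        Module.finrank ℂ
          ↥(⨅ j, LinearMap.ker (LinearMap.dualMap
              ((A j - μ j • 1 : Module.End ℂ V) : V →ₗ[ℂ] V))) ≤ r) := by
  constructor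
  · rintro ⟨B, rfl, hB⟩ μ
    exact finrank_iInf_ker_dualMap_le_of_span_adjoin_eq_top hB μ
  · intro h
    refine Module.End.exists_finrank_eq_span_adjoin_eq_top hcomm hr fun μ => ?_
    have := finrank_iInf_ker_dualMap_add_finrank_iSup_range fun j => A j - μ j • 1
    have := h μ
    omega
end
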